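/- Let μ be a probability measure on a measurable space Ω, let X be a random point in Ω distributed according to μ, and let f : Ω → ℝ be measurable with ∫|f(x)| dμ(x) < ∞. Let b₀ ∈ ℝ be a median of f(X), and define the probability measures dμ₁(x) = (2·1{f(x) > b₀} + 2α·1{f(x) = b₀}) dμ(x) and dμ₂(x) = (2·1{f(x) < b₀} + 2(1−α)·1{f(x) = b₀}) dμ(x), where α ∈ [0,1] is chosen so that μ₁(Ω) = μ₂(Ω) = 1 (such α exists). Then (1/2)μ₁ + (1/2)μ₂ = μ and (1/2)|∫ f dμ₁ − ∫ f dμ₂| = inf_{b ∈ ℝ} ∫ |f(x) − b| dμ(x). -/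

import Mathlib

open MeasureTheory
open scoped ENNReal RealInnerProductSpace Classical

noncomputable section

/-- The outer product `x xᵀ` of a vector in Euclidean space, as a matrix. -/
def outer {d : ℕ} (x : EuclideanSpace ℝ (Fin d)) : Matrix (Fin d) (Fin d) ℝ :=
  Matrix.of fun i j => x i * x j

/-- The trace inner product `⟨A, B⟩ = Tr (A B)` on symmetric matrices. -/
def minner {d : ℕ} (A B : Matrix (Fin d) (Fin d) ℝ) : ℝ :=
  Matrix.trace (A * B)

/-- The Frobenius norm of a matrix. -/
def frobNorm {d : ℕ} (M : Matrix (Fin d) (Fin d) ℝ) : ℝ :=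
  Real.sqrt (∑ i, ∑ j, (M i j) ^ 2)

/-- Entrywise integral of a matrix-valued function. -/
def mIntegral {d : ℕ} (μ : Measure (EuclideanSpace ℝ (Fin d)))
    (F : EuclideanSpace ℝ (Fin d) → Matrix (Fin d) (Fin d) ℝ) :
    Matrix (Fin d) (Fin d) ℝ :=
  Matrix.of fun i j => ∫ x, F x i j ∂μ

/-- The fourth moment operator `T_μ (A) = ∫ ⟨A, xxᵀ⟩ xxᵀ dμ(x)`. -/
def fourthMomentOp {d : ℕ} (μ : Measure (EuclideanSpace ℝ (Fin d)))
    (A : Matrix (Fin d) (Fin d) ℝ) : Matrix (Fin d) (Fin d) ℝ :=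
  mIntegral μ (fun x => minner A (outer x) • outer x)

/-- The second moment matrix `B = ∫ xxᵀ dμ(x)`. -/
def secondMoment {d : ℕ} (μ : Measure (EuclideanSpace ℝ (Fin d))) :
    Matrix (Fin d) (Fin d) ℝ :=
  mIntegral μ outer

/-- `lam : ℕ → ℝ` lists the eigenvalues (with multiplicity) of the fourth moment operator
`T_μ`, viewed as an operator on the `d(d+1)/2`-dimensional inner product space of symmetric
matrices, in descending order, padded by `0` beyond index `d(d+1)/2`. -/
def IsEigenSeq {d : ℕ} (μ : Measure (EuclideanSpace ℝ (Fin d))) (lam : ℕ → ℝ) : Prop :=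
  Antitone lam ∧ (∀ i, d * (d + 1) / 2 ≤ i → lam i = 0) ∧
  ∃ b : Fin (d * (d + 1) / 2) → Matrix (Fin d) (Fin d) ℝ,
    (∀ i, (b i).IsSymm) ∧
    (∀ i j, minner (b i) (b j) = if i = j then 1 else 0) ∧
    (∀ A : Matrix (Fin d) (Fin d) ℝ, A.IsSymm → A ∈ Submodule.span ℝ (Set.range b)) ∧
    (∀ i : Fin (d * (d + 1) / 2), fourthMomentOp μ (b i) = lam i • b i)

/-- The second order separation parameter `s(μ)`. -/
def sep {d : ℕ} (μ : Measure (EuclideanSpace ℝ (Fin d))) : ℝ :=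
  (1 / 2) * sSup { r : ℝ | ∃ μ₁ μ₂ : Measure (EuclideanSpace ℝ (Fin d)),
    IsProbabilityMeasure μ₁ ∧ IsProbabilityMeasure μ₂ ∧
    μ = (2 : ℝ≥0∞)⁻¹ • μ₁ + (2 : ℝ≥0∞)⁻¹ • μ₂ ∧
    r = frobNorm (secondMoment μ₁ - secondMoment μ₂) }

/-- The standard Gaussian measure `N(0, I)` on `ℝ^d`. -/
def stdGaussian (d : ℕ) : Measure (EuclideanSpace ℝ (Fin d)) :=
  (Measure.pi fun _ : Fin d => ProbabilityTheory.gaussianReal 0 1).map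
    (MeasurableEquiv.toLp 2 (Fin d → ℝ))

/-- The centered Gaussian measure `N(0, B)` on `ℝ^d` with positive semidefinite
covariance matrix `B`, obtained as the pushforward of `N(0, I)` by `B^{1/2}`. -/
def gaussianCov {d : ℕ} (B : Matrix (Fin d) (Fin d) ℝ) :
    Measure (EuclideanSpace ℝ (Fin d)) :=
  if hB : B.PosSemidef then (stdGaussian d).map (fun x => Matrix.toEuclideanLin
    (hB.1.eigenvectorUnitary.1 * Matrix.diagonal ((↑) ∘ Real.sqrt ∘ hB.1.eigenvalues) *
      (star hB.1.eigenvectorUnitary : Matrix (Fin d) (Fin d) ℝ)) x)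
  else 0

/-- The positive semidefinite square root `B^{1/2}` of a positive semidefinite matrix. -/
def psdSqrt {d : ℕ} (B : Matrix (Fin d) (Fin d) ℝ) : Matrix (Fin d) (Fin d) ℝ :=
  if hB : B.PosSemidef then
    hB.1.eigenvectorUnitary.1 * Matrix.diagonal ((↑) ∘ Real.sqrt ∘ hB.1.eigenvalues) *
      (star hB.1.eigenvectorUnitary : Matrix (Fin d) (Fin d) ℝ) else 0

/-! `μ₂` is the construction of `μ₁` for `-f`, `-b₀`, `1 - α`, and the two densities sum to `2`,
so `μ` is their average. As `μ₁, μ₂` are probability measures,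
`∫ f ∂μ₁ - ∫ f ∂μ₂ = ∫ (f - b₀) ∂μ₁ + ∫ (b₀ - f) ∂μ₂ = 2 ∫ (f - b₀)⁺ ∂μ + 2 ∫ (b₀ - f)⁺ ∂μ
= 2 ∫ |f - b₀| ∂μ`, the atom `{f = b₀}` contributing nothing whatever `α` is. Finally a median
minimises `b ↦ ∫ |f - b| ∂μ`: raising `b` above `b₀` by `t` gains `t` on `{f ≤ b₀}`, of mass
at least `1/2`, and loses at most `t` elsewhere. -/

section MedianSplit

variable {Ω : Type*} {f : Ω → ℝ} {m α : ℝ}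

def upperSplitDensity (f : Ω → ℝ) (m α : ℝ) : Ω → ℝ≥0∞ := fun x =>
  if m < f x then 2 else if f x = m then ENNReal.ofReal (2 * α) else 0

lemma upperSplitDensity_ne_top (x : Ω) : upperSplitDensity f m α x ≠ ∞ := by
  unfold upperSplitDensity
  split_ifs <;> simp [ENNReal.mul_eq_top]

lemma upperSplitDensity_add_upperSplitDensity_neg (hα0 : 0 ≤ α) (hα1 : α ≤ 1) (x : Ω) :
    upperSplitDensity f m α x + upperSplitDensity (-f) (-m) (1 - α) x = 2 := by
  rcases lt_trichotomy (f x) m with h | h | h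
  · simp [upperSplitDensity, h, lt_asymm h, h.ne]
  · rw [upperSplitDensity, upperSplitDensity]
    simp only [h, Pi.neg_apply, lt_irrefl, if_false, if_true]
    rw [← ENNReal.ofReal_add (by linarith) (by linarith), show 2 * α + 2 * (1 - α) = 2 by ring]
    simp
  · simp [upperSplitDensity, h, lt_asymm h, h.ne']

lemma toReal_upperSplitDensity_mul (x : Ω) :
    (upperSplitDensity f m α x).toReal * (f x - m) = 2 * max (f x - m) 0 := by
  rcases lt_trichotomy (f x) m with h | h | h
  · simp [upperSplitDensity, lt_asymm h, h.ne, max_eq_right (sub_nonpos.2 h.le)]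
  · simp [h]
  · simp [upperSplitDensity, h, max_eq_left (sub_nonneg.2 h.le)]

variable [MeasurableSpace Ω] {μ : Measure Ω}

lemma measurable_upperSplitDensity (hf : Measurable f) :
    Measurable (upperSplitDensity f m α) :=
  Measurable.ite (measurableSet_lt measurable_const hf) measurable_const
    (Measurable.ite (measurableSet_eq_fun hf measurable_const) measurable_const measurable_const)

lemma integral_sub_withDensity_upperSplitDensity (hf : Measurable f) :
    ∫ x, (f x - m) ∂μ.withDensity (upperSplitDensity f m α) = 2 * ∫ x, max (f x - m) 0 ∂μ := by
  rw [integral_withDensity_eq_integral_toReal_smul (measurable_upperSplitDensity hf)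
    (ae_of_all _ fun x => (upperSplitDensity_ne_top x).lt_top), ← integral_const_mul]
  simp only [smul_eq_mul, toReal_upperSplitDensity_mul]

lemma half_withDensity_add_half_withDensity_neg (hf : Measurable f) (hα0 : 0 ≤ α)
    (hα1 : α ≤ 1) :
    (2 : ℝ≥0∞)⁻¹ • μ.withDensity (upperSplitDensity f m α) +
      (2 : ℝ≥0∞)⁻¹ • μ.withDensity (upperSplitDensity (-f) (-m) (1 - α)) = μ := by
  have hd := measurable_upperSplitDensity (m := m) (α := α) hf
  have hsum : (2 : ℝ≥0∞)⁻¹ • (upperSplitDensity f m α + upperSplitDensity (-f) (-m) (1 - α)) = 1 :=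
    funext fun x => by
      simp [upperSplitDensity_add_upperSplitDensity_neg hα0 hα1, ENNReal.inv_mul_cancel]
  rw [← smul_add, ← withDensity_add_left hd,
    ← withDensity_smul _ (hd.add (measurable_upperSplitDensity hf.neg)), hsum, withDensity_one]

lemma integrable_of_eq_half_smul_add_half_smul {μ₁ μ₂ : Measure Ω} {g : Ω → ℝ}
    (h : (2 : ℝ≥0∞)⁻¹ • μ₁ + (2 : ℝ≥0∞)⁻¹ • μ₂ = μ) (hg : Integrable g μ) : Integrable g μ₁ :=
  (integrable_smul_measure (by simp) (by simp)).1 (integrable_add_measure.1 (h ▸ hg)).1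

lemma integral_withDensity_upperSplitDensity_sub (hf : Measurable f) (hint : Integrable f μ)
    (hα0 : 0 ≤ α) (hα1 : α ≤ 1)
    [IsProbabilityMeasure (μ.withDensity (upperSplitDensity f m α))]
    [IsProbabilityMeasure (μ.withDensity (upperSplitDensity (-f) (-m) (1 - α)))] :
    ∫ x, f x ∂μ.withDensity (upperSplitDensity f m α) -
      ∫ x, f x ∂μ.withDensity (upperSplitDensity (-f) (-m) (1 - α)) =
        2 * ∫ x, |f x - m| ∂μ := by
  have hmix := half_withDensity_add_half_withDensity_neg (μ := μ) (m := m) hf hα0 hα1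
  have : IsProbabilityMeasure μ := ⟨by rw [← hmix]; simp [ENNReal.inv_two_add_inv_two]⟩
  have h₁ := integrable_of_eq_half_smul_add_half_smul hmix hint
  have h₂ := integrable_of_eq_half_smul_add_half_smul ((add_comm _ _).trans hmix) hint
  calc ∫ x, f x ∂μ.withDensity (upperSplitDensity f m α) -
        ∫ x, f x ∂μ.withDensity (upperSplitDensity (-f) (-m) (1 - α))
      = ∫ x, (f x - m) ∂μ.withDensity (upperSplitDensity f m α) +
          ∫ x, ((-f) x - -m) ∂μ.withDensity (upperSplitDensity (-f) (-m) (1 - α)) := by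
        rw [integral_sub h₁ (integrable_const m), integral_sub h₂.neg (integrable_const (-m))]
        simp only [Pi.neg_apply, integral_neg, integral_const, probReal_univ, one_smul]
        ring
    _ = 2 * ∫ x, max (f x - m) 0 ∂μ + 2 * ∫ x, max ((-f) x - -m) 0 ∂μ := by
        rw [integral_sub_withDensity_upperSplitDensity hf,
          integral_sub_withDensity_upperSplitDensity hf.neg]
    _ = 2 * ∫ x, |f x - m| ∂μ := by
        have hint' : Integrable (fun x => f x - m) μ := hint.sub (integrable_const m)
        have hneg (x : Ω) : (-f) x - -m = -(f x - m) := by simp only [Pi.neg_apply]; ring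
        simp only [hneg]
        rw [← mul_add, ← integral_add hint'.pos_part hint'.neg_part]
        simp only [max_zero_add_max_neg_zero_eq_abs_self]

def IsMedian (μ : Measure Ω) (f : Ω → ℝ) (m : ℝ) : Prop :=
  2⁻¹ ≤ μ {x | m ≤ f x} ∧ 2⁻¹ ≤ μ {x | f x ≤ m}

lemma IsMedian.neg (h : IsMedian μ f m) : IsMedian μ (-f) (-m) := by
  simpa [IsMedian, and_comm] using h

lemma integral_abs_sub_le_of_le [IsProbabilityMeasure μ] (hf : Measurable f)
    (hint : Integrable f μ) {b : ℝ} (hmb : m ≤ b) (hm : 2⁻¹ ≤ μ {x | f x ≤ m}) :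
    ∫ x, |f x - m| ∂μ ≤ ∫ x, |f x - b| ∂μ := by
  set S := {x | f x ≤ m}
  have hS : MeasurableSet S := measurableSet_le hf measurable_const
  set K : Ω → ℝ := fun x => 2 * S.indicator 1 x - 1
  have h_ind : Integrable (S.indicator (1 : Ω → ℝ)) μ := (integrable_const 1).indicator hS
  have hK_int : Integrable K μ := (h_ind.const_mul 2).sub (integrable_const 1)
  have hK_nonneg : 0 ≤ ∫ x, K x ∂μ := by
    have hS_half : (2 : ℝ)⁻¹ ≤ μ.real S := by
      simpa [measureReal_def] using ENNReal.toReal_mono (measure_ne_top μ S) hm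
    simp only [K]
    rw [integral_sub (h_ind.const_mul 2) (integrable_const 1),
      integral_const_mul, integral_indicator_one hS]
    simp only [integral_const, probReal_univ, smul_eq_mul, mul_one]
    linarith
  have hpt : ∀ x, (b - m) * K x ≤ |f x - b| - |f x - m| := by
    intro x
    by_cases hx : x ∈ S
    · have hxm : f x ≤ m := hx
      simp only [K, Set.indicator_of_mem hx, Pi.one_apply]
      rw [abs_of_nonpos (by linarith), abs_of_nonpos (by linarith)]
      linarith
    · have := abs_sub_le (f x) b m
      simp only [K, Set.indicator_of_notMem hx]
      rw [abs_of_nonneg (sub_nonneg.2 hmb)] at this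
      linarith
  have hint_abs (c : ℝ) : Integrable (fun x => |f x - c|) μ :=
    (hint.sub (integrable_const c)).abs
  have key := integral_mono (hK_int.const_mul (b - m)) ((hint_abs b).sub (hint_abs m)) hpt
  simp only [Pi.sub_apply] at key
  rw [integral_const_mul, integral_sub (hint_abs b) (hint_abs m)] at key
  nlinarith [mul_nonneg (sub_nonneg.2 hmb) hK_nonneg]

lemma IsMedian.integral_abs_sub_le [IsProbabilityMeasure μ] (h : IsMedian μ f m)
    (hf : Measurable f) (hint : Integrable f μ) (b : ℝ) :
    ∫ x, |f x - m| ∂μ ≤ ∫ x, |f x - b| ∂μ := by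
  rcases le_total m b with hmb | hbm
  · exact integral_abs_sub_le_of_le hf hint hmb h.2
  · have := integral_abs_sub_le_of_le hf.neg hint.neg (neg_le_neg hbm) h.neg.2
    simpa only [Pi.neg_apply, neg_sub_neg, abs_sub_comm m, abs_sub_comm b] using this

lemma IsMedian.iInf_integral_abs_sub [IsProbabilityMeasure μ] (h : IsMedian μ f m)
    (hf : Measurable f) (hint : Integrable f μ) :
    ⨅ b, ∫ x, |f x - b| ∂μ = ∫ x, |f x - m| ∂μ :=
  le_antisymm (ciInf_le ⟨0, by rintro _ ⟨b, rfl⟩; exact integral_nonneg fun _ => abs_nonneg _⟩ m)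
    (le_ciInf (h.integral_abs_sub_le hf hint))

end MedianSplit

/-- splitting a probability measure at a median `b₀` of `f` gives an equal
weight decomposition achieving `inf_b ∫ |f - b| dμ`. -/
theorem median_split
    {Ω : Type*} [MeasurableSpace Ω] (μ : Measure Ω) [IsProbabilityMeasure μ]
    (f : Ω → ℝ) (hf : Measurable f) (hint : Integrable f μ)
    (b₀ : ℝ) (hmed1 : (2 : ℝ≥0∞)⁻¹ ≤ μ {x | b₀ ≤ f x})
    (hmed2 : (2 : ℝ≥0∞)⁻¹ ≤ μ {x | f x ≤ b₀})
    (α : ℝ) (hα0 : 0 ≤ α) (hα1 : α ≤ 1)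
    (μ₁ μ₂ : Measure Ω)
    (hμ₁ : μ₁ = μ.withDensity fun x =>
      if b₀ < f x then 2 else if f x = b₀ then ENNReal.ofReal (2 * α) else 0)
    (hμ₂ : μ₂ = μ.withDensity fun x =>
      if f x < b₀ then 2 else if f x = b₀ then ENNReal.ofReal (2 * (1 - α)) else 0)
    (h1 : μ₁ Set.univ = 1) (h2 : μ₂ Set.univ = 1) :
    (2 : ℝ≥0∞)⁻¹ • μ₁ + (2 : ℝ≥0∞)⁻¹ • μ₂ = μ ∧
      (1 / 2) * |(∫ x, f x ∂μ₁) - ∫ x, f x ∂μ₂| = ⨅ b : ℝ, ∫ x, |f x - b| ∂μ := by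
  replace hμ₁ : μ₁ = μ.withDensity (upperSplitDensity f b₀ α) := hμ₁
  replace hμ₂ : μ₂ = μ.withDensity (upperSplitDensity (-f) (-b₀) (1 - α)) := by
    rw [hμ₂]
    congr with x
    simp [upperSplitDensity]
  subst hμ₁ hμ₂
  have : IsProbabilityMeasure (μ.withDensity (upperSplitDensity f b₀ α)) := ⟨h1⟩
  have : IsProbabilityMeasure (μ.withDensity (upperSplitDensity (-f) (-b₀) (1 - α))) := ⟨h2⟩
  refine ⟨half_withDensity_add_half_withDensity_neg hf hα0 hα1, ?_⟩
  rw [integral_withDensity_upperSplitDensity_sub hf hint hα0 hα1,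
    (show IsMedian μ f b₀ from ⟨hmed1, hmed2⟩).iInf_integral_abs_sub hf hint,
    abs_of_nonneg (mul_nonneg zero_le_two (integral_nonneg fun _ => abs_nonneg _))]
  ring
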